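/- Let h4, h5 : ℝ → ℝ be smooth functions of a variable v with h4(v) ≠ 0, h5(v) ≠ 0 and h5'(v) ≠ 0 for all v. If √|h4| = h0 · (√|h5|)' for a nonzero constant h0, then h5'' - h5' · (log √|h4·h5|)' = 0, i.e. h5 satisfies the vacuum equation h5'' = h5' · ((h4'/(2h4)) + (h5'/(2h5))). -/

import Mathlib

/-- A continuous nowhere-vanishing real function has constant sign. -/
lemma sign_const_aux {g : ℝ → ℝ} (hc : Continuous g) (hne : ∀ v, g v ≠ 0)
    {a b : ℝ} (ha : g a < 0) (hb : 0 < g b) : False := by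
  have h0 : (0:ℝ) ∈ Set.uIcc (g a) (g b) := Set.mem_uIcc.2 (Or.inl ⟨ha.le, hb.le⟩)
  obtain ⟨c, -, hc0⟩ := intermediate_value_uIcc hc.continuousOn h0
  exact hne c hc0

/-- Formula (p1): if `√|h4| = h0 · (√|h5|)'` with nonvanishing data, then `h5` solves the
vacuum equation `h5'' = h5' · (h4'/(2h4) + h5'/(2h5))`, i.e. `h5'' - h5'(log √|h4 h5|)' = 0`. -/
theorem stmt0 (h4 h5 : ℝ → ℝ) (h0 : ℝ)
    (hs4 : ContDiff ℝ (⊤ : ℕ∞) h4) (hs5 : ContDiff ℝ (⊤ : ℕ∞) h5)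
    (h4ne : ∀ v, h4 v ≠ 0) (h5ne : ∀ v, h5 v ≠ 0)
    (h5dne : ∀ v, deriv h5 v ≠ 0) (h0ne : h0 ≠ 0)
    (hrel : ∀ v, Real.sqrt |h4 v| = h0 * deriv (fun t => Real.sqrt |h5 t|) v) :
    ∀ v, deriv (deriv h5) v =
      deriv h5 v * (deriv h4 v / (2 * h4 v) + deriv h5 v / (2 * h5 v)) := by
  have hd4 : Differentiable ℝ h4 := hs4.differentiable (by simp)
  have hd5 : Differentiable ℝ h5 := hs5.differentiable (by simp)
  have hs5i : ContDiff ℝ ((⊤:ℕ∞) : WithTop ℕ∞) h5 := hs5.of_le (by simp)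
  have hd5' : Differentiable ℝ (deriv h5) :=
    ((contDiff_infty_iff_deriv.mp hs5i).2).differentiable (by simp)
  -- Key identity: |h4| * |h5| = h0^2 * (h5')^2 / 4
  have K : ∀ v, |h4 v| * |h5 v| = h0 ^ 2 * (deriv h5 v) ^ 2 / 4 := by
    intro v
    rcases (h5ne v).lt_or_gt with hneg | hpos
    · -- h5 v < 0 : locally |h5| = -h5
      have hev : ∀ᶠ t in nhds v, h5 t < 0 :=
        (hd5.continuous.continuousAt).eventually_lt continuousAt_const hneg
      have heq : (fun t => Real.sqrt |h5 t|) =ᶠ[nhds v] fun t => Real.sqrt (-(h5 t)) := by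
        filter_upwards [hev] with t ht
        rw [abs_of_neg ht]
      have hda : HasDerivAt (fun t => Real.sqrt (-(h5 t)))
          (-(deriv h5 v) / (2 * Real.sqrt (-(h5 v)))) v :=
        ((hd5 v).hasDerivAt.neg).sqrt (by simpa using hneg.ne)
      have hD : deriv (fun t => Real.sqrt |h5 t|) v
          = -(deriv h5 v) / (2 * Real.sqrt (-(h5 v))) := by
        rw [heq.deriv_eq, hda.deriv]
      have h4abs : |h4 v| = h0 ^ 2 * ((-(deriv h5 v)) / (2 * Real.sqrt (-(h5 v)))) ^ 2 := by
        have := hrel v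
        rw [hD] at this
        have h1 : |h4 v| = Real.sqrt |h4 v| ^ 2 := (Real.sq_sqrt (abs_nonneg _)).symm
        rw [h1, this]; ring
      have hsq : Real.sqrt (-(h5 v)) ^ 2 = -(h5 v) :=
        Real.sq_sqrt (by linarith)
      have hsne : Real.sqrt (-(h5 v)) ≠ 0 := by
        intro h; rw [h] at hsq; simp at hsq; linarith
      have hpow : (-(deriv h5 v) / (2 * Real.sqrt (-(h5 v)))) ^ 2
          = (deriv h5 v) ^ 2 / (4 * (-(h5 v))) := by
        rw [div_pow, mul_pow, hsq]; ring
      rw [h4abs, abs_of_neg hneg, hpow]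
      have hne' : -h5 v ≠ 0 := neg_ne_zero.2 (h5ne v)
      field_simp [h5ne v]
    · -- 0 < h5 v
      have hev : ∀ᶠ t in nhds v, 0 < h5 t :=
        continuousAt_const.eventually_lt (hd5.continuous.continuousAt) hpos
      have heq : (fun t => Real.sqrt |h5 t|) =ᶠ[nhds v] fun t => Real.sqrt (h5 t) := by
        filter_upwards [hev] with t ht
        rw [abs_of_pos ht]
      have hda : HasDerivAt (fun t => Real.sqrt (h5 t))
          (deriv h5 v / (2 * Real.sqrt (h5 v))) v :=
        (hd5 v).hasDerivAt.sqrt hpos.ne'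
      have hD : deriv (fun t => Real.sqrt |h5 t|) v
          = deriv h5 v / (2 * Real.sqrt (h5 v)) := by
        rw [heq.deriv_eq, hda.deriv]
      have h4abs : |h4 v| = h0 ^ 2 * (deriv h5 v / (2 * Real.sqrt (h5 v))) ^ 2 := by
        have := hrel v
        rw [hD] at this
        have h1 : |h4 v| = Real.sqrt |h4 v| ^ 2 := (Real.sq_sqrt (abs_nonneg _)).symm
        rw [h1, this]; ring
      have hsq : Real.sqrt (h5 v) ^ 2 = h5 v := Real.sq_sqrt hpos.le
      have hsne : Real.sqrt (h5 v) ≠ 0 := by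
        intro h; rw [h] at hsq; simp at hsq; linarith
      have hpow : (deriv h5 v / (2 * Real.sqrt (h5 v))) ^ 2
          = (deriv h5 v) ^ 2 / (4 * h5 v) := by
        rw [div_pow, mul_pow, hsq]; ring
      rw [h4abs, abs_of_pos hpos, hpow]
      have hne' : h5 v ≠ 0 := h5ne v
      field_simp [h5ne v]
  -- sign of h4 * h5 is constant
  set g : ℝ → ℝ := fun v => h4 v * h5 v with hg
  have hgc : Continuous g := (hd4.continuous).mul hd5.continuous
  have hgne : ∀ v, g v ≠ 0 := fun v => mul_ne_zero (h4ne v) (h5ne v)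
  set c : ℝ := (if 0 < g 0 then (1:ℝ) else -1) * h0 ^ 2 / 4 with hc
  have P : ∀ v, h4 v * h5 v = c * (deriv h5 v) ^ 2 := by
    intro v
    have habs : |g v| = h0 ^ 2 * (deriv h5 v) ^ 2 / 4 := by
      rw [hg]; simp only [abs_mul]; rw [K v]
    by_cases hpos : 0 < g 0
    · have hv : 0 < g v := by
        rcases (hgne v).lt_or_gt with h | h
        · exact absurd (sign_const_aux hgc hgne h hpos) (fun f => f)
        · exact h
      have : g v = |g v| := (abs_of_pos hv).symm
      rw [hc]; simp only [if_pos hpos]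
      calc h4 v * h5 v = g v := rfl
        _ = |g v| := this
        _ = h0 ^ 2 * (deriv h5 v) ^ 2 / 4 := habs
        _ = 1 * h0 ^ 2 / 4 * (deriv h5 v) ^ 2 := by ring
    · have h0neg : g 0 < 0 := (hgne 0).lt_or_gt.resolve_right hpos
      have hv : g v < 0 := by
        rcases (hgne v).lt_or_gt with h | h
        · exact h
        · exact absurd (sign_const_aux hgc hgne h0neg h) (fun f => f)
      have : g v = -|g v| := by rw [abs_of_neg hv]; ring
      rw [hc]; simp only [if_neg hpos]
      calc h4 v * h5 v = g v := rfl
        _ = -|g v| := this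
        _ = -(h0 ^ 2 * (deriv h5 v) ^ 2 / 4) := by rw [habs]
        _ = -1 * h0 ^ 2 / 4 * (deriv h5 v) ^ 2 := by ring
  -- differentiate the identity
  have hPfun : (fun v => h4 v * h5 v) = fun v => c * (deriv h5 v) ^ 2 := funext P
  have Dstep : ∀ v, deriv h4 v * h5 v + h4 v * deriv h5 v
      = c * (2 * deriv h5 v * deriv (deriv h5) v) := by
    intro v
    have l1 : deriv (fun v => h4 v * h5 v) v = deriv h4 v * h5 v + h4 v * deriv h5 v :=
      deriv_mul (hd4 v) (hd5 v)
    have l2 : HasDerivAt (fun v => c * (deriv h5 v) ^ 2)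
        (c * ((2:ℕ) * deriv h5 v ^ 1 * deriv (deriv h5) v)) v :=
      ((hd5' v).hasDerivAt.pow 2).const_mul c
    have l2' := l2.deriv
    rw [← l1, hPfun, l2']
    push_cast
    ring
  intro v
  have e1 := P v
  have e2 := Dstep v
  have h4v := h4ne v
  have h5v := h5ne v
  field_simp
  linear_combination (2 * deriv (deriv h5) v) * e1 - (deriv h5 v) * e2
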